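/- For all b ≥ 1 and a ≥ 0, s((2^b - 1)·2^a) = (-1)^a · b. -/
import Mathlib


def s : ℕ → ℤ
  | 0 => 0
  | n + 1 =>
    if (n + 1) % 2 = 0 then -s ((n + 1) / 2)
    else s (n / 2) + 1
decreasing_by all_goals omega
lemma s_even (n : ℕ) (hn : 1 ≤ n) : s (2 * n) = -s n := by
  obtain ⟨m, rfl⟩ := Nat.exists_eq_add_of_le hn
  rw [show 2 * (1 + m) = (2 * m + 1) + 1 by omega, s, if_pos (by omega),
    show (2 * m + 1 + 1) / 2 = 1 + m by omega]

lemma s_odd (n : ℕ) : s (2 * n + 1) = s n + 1 := by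
  rw [s, if_neg (by omega)]
  congr 2
  omega

lemma s_mersenne (b : ℕ) : s (2 ^ b - 1) = b := by
  induction b with
  | zero => simp [s]
  | succ k ih =>
    have h : 2 ^ (k + 1) - 1 = 2 * (2 ^ k - 1) + 1 := by
      have : 1 ≤ 2 ^ k := Nat.one_le_two_pow
      omega
    rw [h, s_odd, ih]
    push_cast
    ring

theorem stmt3 (b a : ℕ) (hb : 1 ≤ b) : s ((2 ^ b - 1) * 2 ^ a) = (-1) ^ a * b := by
  induction a with
  | zero => simpa using s_mersenne b
  | succ k ih =>
    have h1 : 1 ≤ 2 ^ b - 1 := by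
      have : 2 ≤ 2 ^ b := by
        calc 2 = 2 ^ 1 := rfl
        _ ≤ 2 ^ b := Nat.pow_le_pow_right (by norm_num) hb
      omega
    have h : (2 ^ b - 1) * 2 ^ (k + 1) = 2 * ((2 ^ b - 1) * 2 ^ k) := by ring
    rw [h, s_even _ (by exact Nat.mul_pos h1 (pow_pos (by norm_num) k)), ih]
    ring
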